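/- arXiv:2110.11825 — 4 statements merged into one kernel-verified Lean document; each statement's English description precedes it below -/
import Mathlib

section
/- Let C1 ⊆ V1, C2 ⊆ V2 be proper cones and P : V1 → V2 a linear map. The following are equivalent: (1) P is (C1,C2)-entanglement breaking; (2) for every proper cone C in a finite-dimensional real vector space V, (id_V ⊗ P)(C ⊗max C1) ⊆ C ⊗min C2. -/
open scoped TensorProduct
open Set

noncomputable section

/-- The dual cone of a set `C`, inside the algebraic dual space. -/
def dualConeSet {V : Type*} [AddCommGroup V] [Module ℝ V] (C : Set V) :
    Set (Module.Dual ℝ V) := {φ | ∀ x ∈ C, 0 ≤ φ x}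

/-- A proper cone: a closed convex cone which is generating (`C - C = V`) and
pointed (`C ∩ (-C) = {0}`). -/
def IsProperCone {V : Type*} [NormedAddCommGroup V] [NormedSpace ℝ V] (C : Set V) : Prop :=
  IsClosed C ∧ Convex ℝ C ∧ (∀ ⦃c : ℝ⦄, 0 < c → ∀ ⦃x⦄, x ∈ C → c • x ∈ C) ∧
    (∀ v : V, ∃ x ∈ C, ∃ y ∈ C, v = x - y) ∧ C ∩ (-C) = {0}

/-- `(C₁,C₂)`-entanglement breaking maps. -/
def IsEntanglementBreaking {V₁ V₂ : Type*} [AddCommGroup V₁] [Module ℝ V₁]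
    [AddCommGroup V₂] [Module ℝ V₂] (C₁ : Set V₁) (C₂ : Set V₂) (P : V₁ →ₗ[ℝ] V₂) : Prop :=
  ∃ (m : ℕ) (φ : Fin m → Module.Dual ℝ V₁) (x : Fin m → V₂),
    (∀ i, φ i ∈ dualConeSet C₁) ∧ (∀ i, x i ∈ C₂) ∧ ∀ v, P v = ∑ i, φ i v • x i

/-- The `k`-fold minimal tensor power of a cone. -/
def minTensorPow {V : Type*} [AddCommGroup V] [Module ℝ V] (C : Set V) (k : ℕ) :
    Set (⨂[ℝ] _ : Fin k, V) :=
  convexHull ℝ {z | ∃ x : Fin k → V, (∀ i, x i ∈ C) ∧ z = PiTensorProduct.tprod ℝ x}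

/-- The functional on the `k`-fold tensor power induced by a family of functionals,
`x₁ ⊗ ⋯ ⊗ x_k ↦ ∏ i, φ i (x i)`. -/
def dualPairing {V : Type*} [AddCommGroup V] [Module ℝ V] {k : ℕ}
    (φ : Fin k → Module.Dual ℝ V) : (⨂[ℝ] _ : Fin k, V) →ₗ[ℝ] ℝ :=
  PiTensorProduct.lift ((MultilinearMap.mkPiAlgebra ℝ (Fin k) ℝ).compLinearMap φ)

/-- The `k`-fold maximal tensor power of a cone: the dual of the minimal tensor power of
the dual cone, under the canonical identification of `(V^{⊗k})*` with `(V*)^{⊗k}`. -/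
def maxTensorPow {V : Type*} [AddCommGroup V] [Module ℝ V] (C : Set V) (k : ℕ) :
    Set (⨂[ℝ] _ : Fin k, V) :=
  {z | ∀ φ : Fin k → Module.Dual ℝ V, (∀ i, φ i ∈ dualConeSet C) → 0 ≤ dualPairing φ z}

/-- `(C₁,C₂)`-entanglement annihilating maps: `P^{⊗k}` maps the `k`-fold maximal tensor power
of `C₁` into the `k`-fold minimal tensor power of `C₂`, for every `k ≥ 1`. -/
def IsEntanglementAnnihilating {V₁ V₂ : Type*} [AddCommGroup V₁] [Module ℝ V₁]
    [AddCommGroup V₂] [Module ℝ V₂] (C₁ : Set V₁) (C₂ : Set V₂) (P : V₁ →ₗ[ℝ] V₂) : Prop :=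
  ∀ k : ℕ, 1 ≤ k →
    Set.MapsTo (⇑(PiTensorProduct.map fun _ : Fin k => P))
      (maxTensorPow C₁ k) (minTensorPow C₂ k)

/-- A pair of cones is resilient if every entanglement annihilating map between them is
entanglement breaking. -/
def IsResilientPair {V₁ V₂ : Type*} [AddCommGroup V₁] [Module ℝ V₁]
    [AddCommGroup V₂] [Module ℝ V₂] (C₁ : Set V₁) (C₂ : Set V₂) : Prop :=
  ∀ P : V₁ →ₗ[ℝ] V₂, IsEntanglementAnnihilating C₁ C₂ P → IsEntanglementBreaking C₁ C₂ P

/-- The minimal tensor product of two cones. -/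
def minTensor {V W : Type*} [AddCommGroup V] [Module ℝ V] [AddCommGroup W] [Module ℝ W]
    (C : Set V) (D : Set W) : Set (V ⊗[ℝ] W) :=
  convexHull ℝ {z | ∃ x ∈ C, ∃ y ∈ D, z = x ⊗ₜ[ℝ] y}

/-- The maximal tensor product of two cones: the dual of the minimal tensor product of the
dual cones, under the canonical identification of `(V ⊗ W)*` with `V* ⊗ W*`. -/
def maxTensor {V W : Type*} [AddCommGroup V] [Module ℝ V] [AddCommGroup W] [Module ℝ W]
    (C : Set V) (D : Set W) : Set (V ⊗[ℝ] W) :=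
  {z | ∀ φ ∈ dualConeSet C, ∀ ψ ∈ dualConeSet D,
      0 ≤ TensorProduct.dualDistrib ℝ V W (φ ⊗ₜ[ℝ] ψ) z}

/-- The Lorentz cone `L_n ⊆ ℝ ⊕ ℝⁿ`. -/
def lorentzCone (n : ℕ) : Set (ℝ × EuclideanSpace ℝ (Fin n)) := {p | ‖p.2‖ ≤ p.1}

/-! If `P v = ∑ i, φᵢ v • xᵢ`, then `(id ⊗ P) z = ∑ i, (id ⊗ φᵢ) z ⊗ xᵢ`, and for
`z ∈ C ⊗max C₁` each contraction `(id ⊗ φᵢ) z` pairs nonnegatively with `C*`, so it lies in `C`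
by the bipolar theorem.

Conversely, test the hypothesis on the dual cone `C₁* ⊆ V₁*`, which is again proper, and on the
tensor `τ ∈ V₁* ⊗ V₁` representing `id_{V₁}`. Since `(Φ ⊗ ψ) τ = Φ ψ`, `τ` lies in `C₁* ⊗max C₁`,
so `(id ⊗ P) τ = ∑ j, fⱼ ⊗ yⱼ` with `fⱼ ∈ C₁*`, `yⱼ ∈ C₂`; evaluating the first factor at `v`
gives `P v = ∑ j, fⱼ v • yⱼ`. -/

open Module TensorProduct

namespace IsProperCone

variable {E : Type*} [NormedAddCommGroup E] [NormedSpace ℝ E] {C : Set E}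

lemma zero_mem (hC : IsProperCone C) : (0 : E) ∈ C :=
  (hC.2.2.2.2.symm ▸ rfl : (0 : E) ∈ C ∩ -C).1

/-- Mathlib's `ProperCone` asks only for a closed pointed cone: neither generating nor salient. -/
def toProperCone (hC : IsProperCone C) : ProperCone ℝ E where
  carrier := C
  add_mem' {x y} hx hy := by
    have hmid := hC.2.1 hx hy (by norm_num : (0 : ℝ) ≤ 1 / 2) (by norm_num : (0 : ℝ) ≤ 1 / 2)
      (by norm_num)
    convert hC.2.2.1 two_pos hmid using 1
    module
  zero_mem' := hC.zero_mem
  smul_mem' c x hx := by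
    obtain ⟨c, hc⟩ := c
    rcases hc.eq_or_lt with rfl | hc
    · simpa using hC.zero_mem
    · exact hC.2.2.1 hc hx
  isClosed' := hC.1

lemma mem_of_forall_dual_nonneg (hC : IsProperCone C) {x : E}
    (h : ∀ φ ∈ dualConeSet C, 0 ≤ φ x) : x ∈ C := by
  by_contra hx
  obtain ⟨f, hfC, hfx⟩ := hC.toProperCone.hyperplane_separation_point hx
  exact hfx.not_ge (h f fun y hy => hfC y hy)

variable [FiniteDimensional ℝ E]

lemma span_dualConeSet_eq_top (hC : IsProperCone C) :
    Submodule.span ℝ (dualConeSet C) = ⊤ := by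
  refine Submodule.span_eq_top_of_ne_zero fun z hz => ?_
  by_contra! hvanish
  have hz_mem : z ∈ C := hC.mem_of_forall_dual_nonneg fun φ hφ => (hvanish φ hφ).ge
  have hz_neg : -z ∈ C := hC.mem_of_forall_dual_nonneg fun φ hφ => by simp [hvanish φ hφ]
  exact hz (hC.2.2.2.2 ▸ ⟨hz_mem, hz_neg⟩ : z ∈ ({0} : Set E))

lemma exists_sub_mem_dualConeSet (hC : IsProperCone C) (f : Dual ℝ E) :
    ∃ g ∈ dualConeSet C, ∃ h ∈ dualConeSet C, f = g - h := by
  rcases subsingleton_or_nontrivial (Dual ℝ E) with _ | _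
  · exact ⟨0, fun _ _ => le_rfl, 0, fun _ _ => le_rfl, Subsingleton.elim _ _⟩
  have hrep := ConvexCone.IsReproducing.of_span_eq_top
    (C := (PointedCone.dual (Dual.eval ℝ E) C : ConvexCone ℝ (Dual ℝ E)))
    hC.span_dualConeSet_eq_top
  obtain ⟨g, hg, h, hh, hgh⟩ := hrep.symm ▸ Set.mem_univ f
  exact ⟨g, hg, h, hh, hgh.symm⟩

theorem strongDual (hC : IsProperCone C) :
    IsProperCone (ProperCone.dual (topDualPairing ℝ E).flip C : Set (StrongDual ℝ E)) := by
  set K := ProperCone.dual (topDualPairing ℝ E).flip C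
  refine ⟨K.isClosed, K.convex, fun c hc f hf => K.smul_mem hf hc.le, fun f => ?_, ?_⟩
  · obtain ⟨g, hg, h, hh, hfgh⟩ := hC.exists_sub_mem_dualConeSet (f : Dual ℝ E)
    refine ⟨LinearMap.toContinuousLinearMap g, fun x hx => hg x hx,
      LinearMap.toContinuousLinearMap h, fun x hx => hh x hx, ?_⟩
    ext x
    simpa using LinearMap.congr_fun hfgh x
  · refine Set.eq_singleton_iff_unique_mem.mpr ⟨⟨K.zero_mem, by simp⟩, ?_⟩
    rintro f ⟨hf, hnf⟩
    have hvanish : ∀ x ∈ C, f x = 0 := fun x hx =>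
      le_antisymm (by simpa using hnf hx) (hf hx)
    ext v
    obtain ⟨x, hx, y, hy, rfl⟩ := hC.2.2.2.1 v
    simp [hvanish x hx, hvanish y hy]

end IsProperCone

section MinTensor

variable {V W : Type*} [AddCommGroup V] [Module ℝ V] [AddCommGroup W] [Module ℝ W]

lemma tmul_mem_minTensor {C : Set V} {D : Set W} {x : V} {y : W} (hx : x ∈ C) (hy : y ∈ D) :
    x ⊗ₜ[ℝ] y ∈ minTensor C D :=
  subset_convexHull ℝ _ ⟨x, hx, y, hy, rfl⟩

lemma sum_tmul_mem_minTensor (C : PointedCone ℝ V) {D : Set W} (hD : D.Nonempty)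
    {ι : Type*} [Fintype ι] {x : ι → V} {y : ι → W} (hx : ∀ i, x i ∈ C) (hy : ∀ i, y i ∈ D) :
    ∑ i, x i ⊗ₜ[ℝ] y i ∈ minTensor (C : Set V) D := by
  rcases isEmpty_or_nonempty ι with hι | hι
  · obtain ⟨y₀, hy₀⟩ := hD
    simpa using tmul_mem_minTensor C.zero_mem hy₀
  -- rescale each term by the number of terms to obtain a convex combination
  set n : ℝ := (Fintype.card ι : ℝ)
  have hn : 0 < n := by simp [n, Fintype.card_pos]
  refine mem_convexHull_of_exists_fintype (fun _ => n⁻¹) (fun i => (n • x i) ⊗ₜ[ℝ] y i)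
    (fun _ => by positivity) (by simp [n]) (fun i => ⟨_, C.smul_mem hn.le (hx i), _, hy i, rfl⟩) ?_
  simp [← smul_tmul', smul_smul, hn.ne']

lemma exists_sum_tmul_of_mem_minTensor (C : PointedCone ℝ V) {D : Set W} {z : V ⊗[ℝ] W}
    (hz : z ∈ minTensor (C : Set V) D) :
    ∃ (n : ℕ) (x : Fin n → V) (y : Fin n → W),
      (∀ i, x i ∈ C) ∧ (∀ i, y i ∈ D) ∧ z = ∑ i, x i ⊗ₜ[ℝ] y i := by
  obtain ⟨ι, _, w, p, hw, -, hp, rfl⟩ := mem_convexHull_iff_exists_fintype.mp hz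
  choose x hx y hy hxy using hp
  let e := (Fintype.equivFin ι).symm
  refine ⟨Fintype.card ι, fun k => w (e k) • x (e k), fun k => y (e k),
    fun k => C.smul_mem (hw _) (hx _), fun k => hy _, ?_⟩
  rw [← e.sum_comp]
  simp [hxy, smul_tmul']

end MinTensor

section Contraction

variable {V W : Type*} [AddCommGroup V] [Module ℝ V] [AddCommGroup W] [Module ℝ W]

lemma dualDistrib_tmul_apply_eq_apply_rid_lTensor (ψ : Dual ℝ V) (φ : Dual ℝ W)
    (z : V ⊗[ℝ] W) : dualDistrib ℝ V W (ψ ⊗ₜ φ) z = ψ (TensorProduct.rid ℝ V (φ.lTensor V z)) := by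
  induction z using TensorProduct.induction_on with
  | zero => simp
  | tmul v w => simp [mul_comm]
  | add z z' hz hz' => simp [hz, hz']

lemma map_id_eq_sum_rid_lTensor_tmul {V₁ V₂ : Type*} [AddCommGroup V₁] [Module ℝ V₁]
    [AddCommGroup V₂] [Module ℝ V₂] {P : V₁ →ₗ[ℝ] V₂} {m : ℕ} {φ : Fin m → Dual ℝ V₁}
    {x : Fin m → V₂} (hP : ∀ v, P v = ∑ i, φ i v • x i) (z : V ⊗[ℝ] V₁) :
    map LinearMap.id P z = ∑ i, TensorProduct.rid ℝ V ((φ i).lTensor V z) ⊗ₜ[ℝ] x i := by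
  induction z using TensorProduct.induction_on with
  | zero => simp
  | tmul v w => simp [hP, tmul_sum, smul_tmul', tmul_smul]
  | add z z' hz hz' => simp [hz, hz', add_tmul, Finset.sum_add_distrib]

end Contraction

theorem IsEntanglementBreaking.mapsTo_maxTensor_minTensor {V V₁ V₂ : Type*}
    [NormedAddCommGroup V] [NormedSpace ℝ V] [AddCommGroup V₁] [Module ℝ V₁]
    [AddCommGroup V₂] [Module ℝ V₂] {C : Set V} {C₁ : Set V₁} {C₂ : Set V₂} {P : V₁ →ₗ[ℝ] V₂}
    (hP : IsEntanglementBreaking C₁ C₂ P) (hC : IsProperCone C) (hC₂ : C₂.Nonempty) :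
    MapsTo (map (LinearMap.id : V →ₗ[ℝ] V) P) (maxTensor C C₁) (minTensor C C₂) := by
  obtain ⟨m, φ, x, hφ, hx, hPx⟩ := hP
  intro z hz
  have hcontract : ∀ i, TensorProduct.rid ℝ V ((φ i).lTensor V z) ∈ C := fun i =>
    hC.mem_of_forall_dual_nonneg fun ψ hψ =>
      dualDistrib_tmul_apply_eq_apply_rid_lTensor ψ (φ i) z ▸ hz ψ hψ (φ i) (hφ i)
  rw [map_id_eq_sum_rid_lTensor_tmul hPx]
  exact sum_tmul_mem_minTensor hC.toProperCone.toPointedCone hC₂ hcontract hx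

section IdentityTensor

variable (E : Type*) [NormedAddCommGroup E] [NormedSpace ℝ E] [FiniteDimensional ℝ E]

/-- The tensor corresponding to `id_E` under `E* ⊗ E ≅ End E`, written in a basis and its
dual basis. -/
def identityTensor : StrongDual ℝ E ⊗[ℝ] E :=
  ∑ i, LinearMap.toContinuousLinearMap ((finBasis ℝ E).coord i) ⊗ₜ finBasis ℝ E i

variable {E}

lemma dualDistrib_tmul_identityTensor (Φ : Dual ℝ (StrongDual ℝ E)) (ψ : Dual ℝ E) :
    dualDistrib ℝ _ E (Φ ⊗ₜ ψ) (identityTensor E) = Φ (LinearMap.toContinuousLinearMap ψ) := by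
  have hψ : LinearMap.toContinuousLinearMap ψ = ∑ i, ψ (finBasis ℝ E i) •
      LinearMap.toContinuousLinearMap ((finBasis ℝ E).coord i) := by
    conv_lhs => rw [← (finBasis ℝ E).sum_dual_apply_smul_coord ψ]
    simp_rw [map_sum, map_smul]
  simp [identityTensor, hψ, mul_comm]

lemma lid_rTensor_apply_map_identityTensor {W : Type*} [AddCommGroup W] [Module ℝ W]
    (P : E →ₗ[ℝ] W) (v : E) :
    TensorProduct.lid ℝ W (((topDualPairing ℝ E).flip v).rTensor W
      (map LinearMap.id P (identityTensor E))) = P v := by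
  simp only [identityTensor, map_sum, map_tmul, LinearMap.rTensor_tmul, lid_tmul]
  simp_rw [LinearMap.id_apply, ← map_smul, ← map_sum]
  simp

end IdentityTensor

theorem IsEntanglementBreaking.of_mapsTo_strongDual {V₁ V₂ : Type*} [NormedAddCommGroup V₁]
    [NormedSpace ℝ V₁] [FiniteDimensional ℝ V₁] [AddCommGroup V₂] [Module ℝ V₂]
    {C₁ : Set V₁} {C₂ : Set V₂} {P : V₁ →ₗ[ℝ] V₂}
    (h : MapsTo (map (LinearMap.id : StrongDual ℝ V₁ →ₗ[ℝ] StrongDual ℝ V₁) P)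
      (maxTensor (ProperCone.dual (topDualPairing ℝ V₁).flip C₁ : Set (StrongDual ℝ V₁)) C₁)
      (minTensor (ProperCone.dual (topDualPairing ℝ V₁).flip C₁ : Set (StrongDual ℝ V₁)) C₂)) :
    IsEntanglementBreaking C₁ C₂ P := by
  set K := ProperCone.dual (topDualPairing ℝ V₁).flip C₁
  have hτ : identityTensor V₁ ∈ maxTensor (K : Set (StrongDual ℝ V₁)) C₁ := fun Φ hΦ ψ hψ => by
    rw [dualDistrib_tmul_identityTensor]
    exact hΦ _ fun x hx => by simpa using hψ x hx
  obtain ⟨n, f, y, hf, hy, hfy⟩ := exists_sum_tmul_of_mem_minTensor K.toPointedCone (h hτ)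
  refine ⟨n, fun j => f j, y, fun j x hx => hf j hx, hy, fun v => ?_⟩
  have := congr(TensorProduct.lid ℝ V₂ (((topDualPairing ℝ V₁).flip v).rTensor V₂ $hfy))
  rw [lid_rTensor_apply_map_identityTensor] at this
  simpa using this

theorem entanglementBreaking_iff_breaks_all_entanglement_general
    {V₁ V₂ : Type} [NormedAddCommGroup V₁] [NormedSpace ℝ V₁] [FiniteDimensional ℝ V₁]
    [NormedAddCommGroup V₂] [NormedSpace ℝ V₂]
    (C₁ : Set V₁) (C₂ : Set V₂) (h₁ : IsProperCone C₁) (h₂ : IsProperCone C₂)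
    (P : V₁ →ₗ[ℝ] V₂) :
    IsEntanglementBreaking C₁ C₂ P ↔
      ∀ (V : Type) [NormedAddCommGroup V] [NormedSpace ℝ V] [FiniteDimensional ℝ V],
        ∀ C : Set V, IsProperCone C →
          Set.MapsTo (⇑(TensorProduct.map (LinearMap.id : V →ₗ[ℝ] V) P))
            (maxTensor C C₁) (minTensor C C₂) :=
  ⟨fun hP _ _ _ _ _ hC => hP.mapsTo_maxTensor_minTensor hC ⟨0, h₂.zero_mem⟩,
    fun h => .of_mapsTo_strongDual (h _ _ h₁.strongDual)⟩

/-- **Proposition.** `P` is `(C₁,C₂)`-entanglement breaking iff for every proper cone `C`,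
`(id ⊗ P)(C ⊗max C₁) ⊆ C ⊗min C₂`. -/
theorem entanglementBreaking_iff_breaks_all_entanglement
    {V₁ V₂ : Type} [NormedAddCommGroup V₁] [NormedSpace ℝ V₁] [FiniteDimensional ℝ V₁]
    [NormedAddCommGroup V₂] [NormedSpace ℝ V₂] [FiniteDimensional ℝ V₂]
    (C₁ : Set V₁) (C₂ : Set V₂) (h₁ : IsProperCone C₁) (h₂ : IsProperCone C₂)
    (P : V₁ →ₗ[ℝ] V₂) :
    IsEntanglementBreaking C₁ C₂ P ↔
      ∀ (V : Type) [NormedAddCommGroup V] [NormedSpace ℝ V] [FiniteDimensional ℝ V],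
        ∀ C : Set V, IsProperCone C →
          Set.MapsTo (⇑(TensorProduct.map (LinearMap.id : V →ₗ[ℝ] V) P))
            (maxTensor C C₁) (minTensor C C₂) :=
  entanglementBreaking_iff_breaks_all_entanglement_general C₁ C₂ h₁ h₂ P
end
end

section
/- For i ∈ {1,2,3,4}, let C_i ⊆ V_i be proper cones. Fix k ≥ 1, let E_1,…,E_N : V1 → V2^{⊗k} be (C1, C2^{⊗max k})-positive maps and D_1,…,D_N : V3^{⊗k} → V4 be (C3^{⊗min k}, C4)-positive maps. If P : V2 → V3 is (C2,C3)-entanglement annihilating, then the map Q = Σ_{i=1}^N D_i ∘ P^{⊗k} ∘ E_i is (C1,C4)-entanglement annihilating. -/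
open scoped TensorProduct
open Set

noncomputable section

/-!
Expanding the tensor power multilinearly, `Q^{⊗m} = ∑_f ⨂_j (D_{f j} ∘ P^{⊗k} ∘ E_{f j})`, and
`C₄^{⊗min m}` is a convex cone, so it suffices to treat one term. The `E`s carry `C₁^{⊗max m}`
into `(C₂^{⊗max k})^{⊗max m}` and the `D`s carry `(C₃^{⊗min k})^{⊗min m}` into `C₄^{⊗min m}`.
In between, `P^{⊗k}` is `(C₂^{⊗max k}, C₃^{⊗min k})`-entanglement annihilating: the regrouping
`V^{⊗mk} → (V^{⊗k})^{⊗m}` is onto, pulls `(C^{⊗max k})^{⊗max m}` back into `C^{⊗max mk}`, and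
maps `C^{⊗min mk}` into `(C^{⊗min k})^{⊗min m}`, so this is entanglement annihilation of `P` at
level `mk`.
-/

open PiTensorProduct

theorem LinearMap.mapsTo_convexHull {𝕜 E F : Type*} [Ring 𝕜] [PartialOrder 𝕜]
    [AddCommGroup E] [AddCommGroup F] [Module 𝕜 E] [Module 𝕜 F]
    (f : E →ₗ[𝕜] F) {s : Set E} {t : Set F} (h : MapsTo f s t) :
    MapsTo f (convexHull 𝕜 s) (convexHull 𝕜 t) := fun _ hz =>
  convexHull_mono h.image_subset (f.image_convexHull s ▸ mem_image_of_mem f hz)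

theorem PiTensorProduct.map_sum_eq_sum_map {R ι κ : Type*} [CommSemiring R] [Fintype ι]
    [DecidableEq ι] [Fintype κ] {M N : Type*} [AddCommMonoid M] [Module R M] [AddCommMonoid N]
    [Module R N] (f : κ → M →ₗ[R] N) :
    map (fun _ : ι => ∑ i, f i) = ∑ g : ι → κ, map fun j => f (g j) := by
  simpa using (mapMultilinear R (fun _ : ι => M) (fun _ : ι => N)).map_sum fun _ => f

theorem IsProperCone.zero_mem_s7 {V : Type*} [NormedAddCommGroup V] [NormedSpace ℝ V] {C : Set V}
    (hC : IsProperCone C) : (0 : V) ∈ C :=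
  (hC.2.2.2.2.symm ▸ rfl : (0 : V) ∈ C ∩ -C).1

section TensorPow

variable {V W : Type*} [AddCommGroup V] [Module ℝ V] [AddCommGroup W] [Module ℝ W]

@[simp]
theorem dualPairing_tprod {k : ℕ} (φ : Fin k → Module.Dual ℝ V) (x : Fin k → V) :
    dualPairing φ (PiTensorProduct.tprod ℝ x) = ∏ i, φ i (x i) := by
  simp [dualPairing]

theorem dualPairing_comp_map {k : ℕ} (φ : Fin k → Module.Dual ℝ W) (g : Fin k → V →ₗ[ℝ] W) :
    dualPairing φ ∘ₗ map g = dualPairing fun i => φ i ∘ₗ g i := by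
  ext x
  simp

theorem mapsTo_maxTensorPow {A : Set V} {B : Set W} {k : ℕ} {g : Fin k → V →ₗ[ℝ] W}
    (hg : ∀ i, MapsTo (g i) A B) : MapsTo (map g) (maxTensorPow A k) (maxTensorPow B k) := by
  intro z hz φ hφ
  rw [← LinearMap.comp_apply, dualPairing_comp_map]
  exact hz _ fun i x hx => hφ i _ (hg i hx)

theorem tprod_mem_minTensorPow {C : Set V} {k : ℕ} {x : Fin k → V} (hx : ∀ i, x i ∈ C) :
    PiTensorProduct.tprod ℝ x ∈ minTensorPow C k :=
  subset_convexHull ℝ _ ⟨x, hx, rfl⟩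

theorem mapsTo_minTensorPow {A : Set V} {B : Set W} {k : ℕ} {g : Fin k → V →ₗ[ℝ] W}
    (hg : ∀ i, MapsTo (g i) A B) : MapsTo (map g) (minTensorPow A k) (minTensorPow B k) :=
  (map g).mapsTo_convexHull <| by
    rintro _ ⟨x, hx, rfl⟩
    exact ⟨_, fun i => hg i (hx i), map_tprod g x⟩

section Cone

variable {C : Set V} {k : ℕ}

theorem zero_mem_minTensorPow (h0 : (0 : V) ∈ C) (hk : 1 ≤ k) :
    (0 : ⨂[ℝ] _ : Fin k, V) ∈ minTensorPow C k := by
  have h := tprod_mem_minTensorPow (C := C) (x := fun _ : Fin k => 0) fun _ => h0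
  rwa [(PiTensorProduct.tprod ℝ).map_coord_zero (⟨0, hk⟩ : Fin k) rfl] at h

theorem smul_mem_minTensorPow (hC : ∀ ⦃c : ℝ⦄, 0 < c → ∀ ⦃x⦄, x ∈ C → c • x ∈ C) (hk : 1 ≤ k)
    {c : ℝ} (hc : 0 < c) {z : ⨂[ℝ] _ : Fin k, V} (hz : z ∈ minTensorPow C k) :
    c • z ∈ minTensorPow C k := by
  have hcz := smul_mem_smul_set (a := c) hz
  rw [minTensorPow, ← convexHull_smul] at hcz
  refine convexHull_mono ?_ hcz
  rintro _ ⟨_, ⟨x, hx, rfl⟩, rfl⟩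
  let i₀ : Fin k := ⟨0, hk⟩
  -- absorb `c` into one factor of the pure tensor, which is where `k ≥ 1` is needed
  refine ⟨Function.update x i₀ (c • x i₀), ?_, ?_⟩
  · exact (Function.forall_update_iff x (p := fun _ y => y ∈ C)).2
      ⟨hC hc (hx i₀), fun i _ => hx i⟩
  · rw [MultilinearMap.map_update_smul, Function.update_eq_self]

theorem add_mem_minTensorPow (hC : ∀ ⦃c : ℝ⦄, 0 < c → ∀ ⦃x⦄, x ∈ C → c • x ∈ C) (hk : 1 ≤ k)
    {a b : ⨂[ℝ] _ : Fin k, V} (ha : a ∈ minTensorPow C k) (hb : b ∈ minTensorPow C k) :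
    a + b ∈ minTensorPow C k := by
  have hmid : (1 / 2 : ℝ) • a + (1 / 2 : ℝ) • b ∈ minTensorPow C k :=
    convex_convexHull ℝ _ ha hb (by norm_num) (by norm_num) (by norm_num)
  have h2 : (2 : ℝ) • ((1 / 2 : ℝ) • a + (1 / 2 : ℝ) • b) = a + b := by
    rw [smul_add, smul_smul, smul_smul]
    norm_num
  exact h2 ▸ smul_mem_minTensorPow hC hk two_pos hmid

theorem sum_mem_minTensorPow (h0 : (0 : V) ∈ C)
    (hC : ∀ ⦃c : ℝ⦄, 0 < c → ∀ ⦃x⦄, x ∈ C → c • x ∈ C) (hk : 1 ≤ k)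
    {ι : Type*} (s : Finset ι) {z : ι → ⨂[ℝ] _ : Fin k, V}
    (hz : ∀ i ∈ s, z i ∈ minTensorPow C k) : ∑ i ∈ s, z i ∈ minTensorPow C k :=
  Finset.sum_induction z (· ∈ minTensorPow C k) (fun _ _ => add_mem_minTensorPow hC hk)
    (zero_mem_minTensorPow h0 hk) hz

end Cone

variable (V) in
def regroupTensorPow (m k : ℕ) :
    (⨂[ℝ] _ : Fin (m * k), V) →ₗ[ℝ] ⨂[ℝ] _ : Fin m, ⨂[ℝ] _ : Fin k, V :=
  lift <| MultilinearMap.domDomCongr ((Equiv.sigmaEquivProd (Fin m) (Fin k)).trans finProdFinEquiv)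
    ((PiTensorProduct.tprod ℝ).compMultilinearMap (β := fun _ => Fin k) (N := fun _ _ => V)
      fun _ => PiTensorProduct.tprod ℝ)

@[simp]
theorem regroupTensorPow_tprod (m k : ℕ) (x : Fin (m * k) → V) :
    regroupTensorPow V m k (PiTensorProduct.tprod ℝ x) =
      PiTensorProduct.tprod ℝ fun j =>
        PiTensorProduct.tprod ℝ fun i => x (finProdFinEquiv (j, i)) :=
  lift.tprod _

theorem regroupTensorPow_surjective (m k : ℕ) : Function.Surjective (regroupTensorPow V m k) := by
  rw [← LinearMap.range_eq_top, eq_top_iff, ← submodule_span_eq_top (R := ℝ)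
    (g := fun (_ : Fin m) (x : Fin k → V) => PiTensorProduct.tprod ℝ x)
    fun _ => span_tprod_eq_top, Submodule.span_le]
  rintro _ ⟨x, rfl⟩
  refine ⟨PiTensorProduct.tprod ℝ fun p => x (finProdFinEquiv.symm p).1 (finProdFinEquiv.symm p).2,
    ?_⟩
  simp only [regroupTensorPow_tprod, Equiv.symm_apply_apply]

theorem dualPairing_comp_regroupTensorPow (m k : ℕ) (φ : Fin (m * k) → Module.Dual ℝ V) :
    dualPairing (fun j => dualPairing fun i => φ (finProdFinEquiv (j, i))) ∘ₗ
      regroupTensorPow V m k = dualPairing φ := by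
  ext x
  simp only [LinearMap.compMultilinearMap_apply, LinearMap.comp_apply, regroupTensorPow_tprod,
    dualPairing_tprod]
  rw [← Fintype.prod_prod_type', Equiv.prod_comp finProdFinEquiv fun p => φ p (x p)]

theorem mem_maxTensorPow_of_regroupTensorPow_mem {C : Set V} {m k : ℕ}
    {u : ⨂[ℝ] _ : Fin (m * k), V}
    (hu : regroupTensorPow V m k u ∈ maxTensorPow (maxTensorPow C k) m) :
    u ∈ maxTensorPow C (m * k) := by
  intro φ hφ
  rw [← dualPairing_comp_regroupTensorPow m k φ, LinearMap.comp_apply]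
  exact hu _ fun j w hw => hw _ fun i => hφ _

theorem mapsTo_regroupTensorPow_minTensorPow (C : Set V) (m k : ℕ) :
    MapsTo (regroupTensorPow V m k) (minTensorPow C (m * k)) (minTensorPow (minTensorPow C k) m) :=
  (regroupTensorPow V m k).mapsTo_convexHull <| by
    rintro _ ⟨x, hx, rfl⟩
    exact ⟨_, fun j => tprod_mem_minTensorPow fun i => hx _, regroupTensorPow_tprod m k x⟩

theorem map_map_comp_regroupTensorPow (m k : ℕ) (P : V →ₗ[ℝ] W) :
    map (fun _ : Fin m => map fun _ : Fin k => P) ∘ₗ regroupTensorPow V m k =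
      regroupTensorPow W m k ∘ₗ map fun _ : Fin (m * k) => P := by
  ext x
  simp

theorem IsEntanglementAnnihilating.tensorPow {C : Set V} {C' : Set W} {P : V →ₗ[ℝ] W}
    (hP : IsEntanglementAnnihilating C C' P) {k : ℕ} (hk : 1 ≤ k) :
    IsEntanglementAnnihilating (maxTensorPow C k) (minTensorPow C' k)
      (map fun _ : Fin k => P) := by
  intro m hm w hw
  obtain ⟨u, rfl⟩ := regroupTensorPow_surjective m k w
  rw [← LinearMap.comp_apply, map_map_comp_regroupTensorPow, LinearMap.comp_apply]
  exact mapsTo_regroupTensorPow_minTensorPow C' m k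
    (hP (m * k) (Nat.mul_pos hm hk) (mem_maxTensorPow_of_regroupTensorPow_mem hw))

end TensorPow

theorem IsEntanglementAnnihilating.mapsTo_map_comp {V₁ V₂ V₃ V₄ : Type*}
    [AddCommGroup V₁] [Module ℝ V₁] [AddCommGroup V₂] [Module ℝ V₂]
    [AddCommGroup V₃] [Module ℝ V₃] [AddCommGroup V₄] [Module ℝ V₄]
    {C₁ : Set V₁} {C₂ : Set V₂} {C₃ : Set V₃} {C₄ : Set V₄} {P : V₂ →ₗ[ℝ] V₃}
    (hP : IsEntanglementAnnihilating C₂ C₃ P) {m : ℕ} (hm : 1 ≤ m)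
    {E : Fin m → V₁ →ₗ[ℝ] V₂} {D : Fin m → V₃ →ₗ[ℝ] V₄}
    (hE : ∀ j, MapsTo (E j) C₁ C₂) (hD : ∀ j, MapsTo (D j) C₃ C₄) :
    MapsTo (map fun j => D j ∘ₗ P ∘ₗ E j) (maxTensorPow C₁ m) (minTensorPow C₄ m) := by
  rw [map_comp, map_comp]
  exact (mapsTo_minTensorPow hD).comp ((hP m hm).comp (mapsTo_maxTensorPow hE))

theorem entanglementAnnihilating_separable_ops_general
    {V₁ V₂ V₃ V₄ : Type*}
    [NormedAddCommGroup V₁] [NormedSpace ℝ V₁]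
    [NormedAddCommGroup V₂] [NormedSpace ℝ V₂]
    [NormedAddCommGroup V₃] [NormedSpace ℝ V₃]
    [NormedAddCommGroup V₄] [NormedSpace ℝ V₄]
    (C₁ : Set V₁) (C₂ : Set V₂) (C₃ : Set V₃) (C₄ : Set V₄)
    (h₄ : IsProperCone C₄)
    (k : ℕ) (hk : 1 ≤ k) (N : ℕ)
    (E : Fin N → (V₁ →ₗ[ℝ] ⨂[ℝ] _ : Fin k, V₂))
    (D : Fin N → ((⨂[ℝ] _ : Fin k, V₃) →ₗ[ℝ] V₄))
    (hE : ∀ i, Set.MapsTo (⇑(E i)) C₁ (maxTensorPow C₂ k))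
    (hD : ∀ i, Set.MapsTo (⇑(D i)) (minTensorPow C₃ k) C₄)
    (P : V₂ →ₗ[ℝ] V₃) (hP : IsEntanglementAnnihilating C₂ C₃ P) :
    IsEntanglementAnnihilating C₁ C₄
      (∑ i, D i ∘ₗ (PiTensorProduct.map fun _ : Fin k => P) ∘ₗ E i) := by
  intro m hm z hz
  rw [PiTensorProduct.map_sum_eq_sum_map, LinearMap.sum_apply]
  exact sum_mem_minTensorPow h₄.zero_mem_s7 h₄.2.2.1 hm _ fun f _ =>
    (hP.tensorPow hk).mapsTo_map_comp hm (fun j => hE (f j)) (fun j => hD (f j)) hz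

/-- **Lemma (entanglement annihilation is preserved under separable operations).** -/
theorem entanglementAnnihilating_separable_ops
    {V₁ V₂ V₃ V₄ : Type*}
    [NormedAddCommGroup V₁] [NormedSpace ℝ V₁] [FiniteDimensional ℝ V₁]
    [NormedAddCommGroup V₂] [NormedSpace ℝ V₂] [FiniteDimensional ℝ V₂]
    [NormedAddCommGroup V₃] [NormedSpace ℝ V₃] [FiniteDimensional ℝ V₃]
    [NormedAddCommGroup V₄] [NormedSpace ℝ V₄] [FiniteDimensional ℝ V₄]
    (C₁ : Set V₁) (C₂ : Set V₂) (C₃ : Set V₃) (C₄ : Set V₄)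
    (h₁ : IsProperCone C₁) (h₂ : IsProperCone C₂)
    (h₃ : IsProperCone C₃) (h₄ : IsProperCone C₄)
    (k : ℕ) (hk : 1 ≤ k) (N : ℕ)
    (E : Fin N → (V₁ →ₗ[ℝ] ⨂[ℝ] _ : Fin k, V₂))
    (D : Fin N → ((⨂[ℝ] _ : Fin k, V₃) →ₗ[ℝ] V₄))
    (hE : ∀ i, Set.MapsTo (⇑(E i)) C₁ (maxTensorPow C₂ k))
    (hD : ∀ i, Set.MapsTo (⇑(D i)) (minTensorPow C₃ k) C₄)
    (P : V₂ →ₗ[ℝ] V₃) (hP : IsEntanglementAnnihilating C₂ C₃ P) :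
    IsEntanglementAnnihilating C₁ C₄
      (∑ i, D i ∘ₗ (PiTensorProduct.map fun _ : Fin k => P) ∘ₗ E i) :=
  entanglementAnnihilating_separable_ops_general C₁ C₂ C₃ C₄ h₄ k hk N E D hE hD P hP
end
end

section
/- Fix integers n, k ≥ 1 and let N(n) be the minimal integer N ≥ 1 such that there exists an n-dimensional linear subspace E ⊆ M_N(R) in which every matrix is a real scalar multiple of an orthogonal matrix (such N exists). Then there exists a tensor z ∈ (R^n)^{⊗k}, the k-fold tensor power of Euclidean space R^n with its induced inner product, such that: (1) ⟨x_1 ⊗ ⋯ ⊗ x_k, z⟩ ≤ ‖x_1‖₂ ⋯ ‖x_k‖₂ for all x_1, …, x_k ∈ R^n; and (2) ‖z‖₂² ≥ n^k / N(n). -/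
open scoped RealInnerProductSpace

noncomputable section

/-- The property that `M_N(ℝ)` contains an `n`-dimensional subspace in which every matrix is
a real multiple of an orthogonal matrix. -/
def HasOrthSubspace (n N : ℕ) : Prop :=
  ∃ E : Submodule ℝ (Matrix (Fin N) (Fin N) ℝ), Module.finrank ℝ E = n ∧
    ∀ A ∈ E, ∃ (c : ℝ) (U : Matrix (Fin N) (Fin N) ℝ),
      U ∈ Matrix.orthogonalGroup (Fin N) ℝ ∧ A = c • U

/-- The element of the `k`-fold tensor power of `ℝⁿ` (realized as the Euclidean space with
orthonormal basis indexed by `Fin k → Fin n`) corresponding to `x₁ ⊗ ⋯ ⊗ x_k`. -/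
def elementaryTensor (n k : ℕ) (x : Fin k → EuclideanSpace ℝ (Fin n)) :
    EuclideanSpace ℝ (Fin k → Fin n) :=
  (WithLp.equiv 2 ((Fin k → Fin n) → ℝ)).symm (fun i => ∏ j, x j (i j))

/-!
Fix a unit vector `e ∈ ℝᴺ`. On the subspace of similarities, `A ↦ A e` is injective and
`‖A w‖ = ‖A e‖ ‖w‖`, so pulling back an orthonormal basis of its image gives a linear map
`Φ : ℝⁿ → M_N(ℝ)` with `‖Φ(v) w‖ = ‖v‖ ‖w‖`. Put `zᵢ = ⟪Φ(e_{i₁}) ⋯ Φ(e_{i_k}) e, u⟫` for a unit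
vector `u`. By multilinearity `⟪x₁ ⊗ ⋯ ⊗ x_k, z⟫ = ⟪Φ(x₁) ⋯ Φ(x_k) e, u⟫ ≤ ∏ ‖x_j‖`. Letting `u` run
through an orthonormal basis, Parseval gives `Σ_u ‖z‖² = Σᵢ ‖Φ(e_{i₁}) ⋯ Φ(e_{i_k}) e‖² = nᵏ`,
so one of the `N` basis vectors gives `‖z‖² ≥ nᵏ / N`.
-/

open Matrix Module

theorem Matrix.norm_toEuclideanLin_of_mem_unitaryGroup {𝕜 m : Type*} [RCLike 𝕜] [Fintype m]
    [DecidableEq m] {U : Matrix m m 𝕜} (hU : U ∈ unitaryGroup m 𝕜) (w : EuclideanSpace 𝕜 m) :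
    ‖U.toEuclideanLin w‖ = ‖w‖ := by
  rw [← coe_toEuclideanCLM_eq_toEuclideanLin, ContinuousLinearMap.coe_coe]
  exact ContinuousLinearMap.norm_map_of_mem_unitary (Unitary.map_mem toEuclideanCLM hU) w

theorem Submodule.exists_linearMap_norm_apply_eq_mul {W : Type*} [NormedAddCommGroup W]
    [InnerProductSpace ℝ W] [FiniteDimensional ℝ W] (S : Submodule ℝ (Module.End ℝ W)) {r : ℕ}
    (hr : finrank ℝ S = r) {e : W} (he : ‖e‖ = 1)
    (hS : ∀ f ∈ S, ∃ c : ℝ, ∀ w, ‖f w‖ = c * ‖w‖) :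
    ∃ Φ : EuclideanSpace ℝ (Fin r) →ₗ[ℝ] Module.End ℝ W, ∀ v w, ‖Φ v w‖ = ‖v‖ * ‖w‖ := by
  have hSe : ∀ f ∈ S, ∀ w, ‖f w‖ = ‖f e‖ * ‖w‖ := by
    intro f hf w
    obtain ⟨c, hc⟩ := hS f hf
    rw [hc, hc e, he, mul_one]
  let ψ : S →ₗ[ℝ] W := LinearMap.applyₗ e ∘ₗ S.subtype
  have hψ : Function.Injective ψ := by
    rw [← LinearMap.ker_eq_bot, LinearMap.ker_eq_bot']
    intro f hf
    ext w : 2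
    have hfe : (f : Module.End ℝ W) e = 0 := hf
    simpa [hfe] using hSe f f.2 w
  let ψ' := LinearEquiv.ofInjective ψ hψ
  let b : OrthonormalBasis (Fin r) ℝ (LinearMap.range ψ) :=
    (stdOrthonormalBasis ℝ _).reindex (finCongr (by rw [LinearMap.finrank_range_of_inj hψ, hr]))
  refine ⟨S.subtype ∘ₗ ψ'.symm.toLinearMap ∘ₗ b.repr.symm.toLinearMap, fun v w => ?_⟩
  have hv : (ψ'.symm (b.repr.symm v) : Module.End ℝ W) e = b.repr.symm v :=
    congrArg Subtype.val (ψ'.apply_symm_apply _)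
  change ‖(ψ'.symm (b.repr.symm v) : Module.End ℝ W) w‖ = _
  rw [hSe _ (ψ'.symm _).2, hv]
  exact congrArg (· * ‖w‖) (b.repr.symm.norm_map v)

theorem HasOrthSubspace.exists_linearMap_norm_apply_eq_mul {n N : ℕ} (h : HasOrthSubspace n N)
    (hN : 0 < N) :
    ∃ Φ : EuclideanSpace ℝ (Fin n) →ₗ[ℝ] Module.End ℝ (EuclideanSpace ℝ (Fin N)),
      ∀ v w, ‖Φ v w‖ = ‖v‖ * ‖w‖ := by
  obtain ⟨E, hE, horth⟩ := h
  refine (E.map (toEuclideanLin : _ ≃ₗ[ℝ] _).toLinearMap).exists_linearMap_norm_apply_eq_mul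
    (by rw [LinearEquiv.finrank_map_eq, hE]) (e := EuclideanSpace.single ⟨0, hN⟩ 1) (by simp) ?_
  rintro _ ⟨A, hA, rfl⟩
  obtain ⟨c, U, hU, rfl⟩ := horth A hA
  exact ⟨‖c‖, fun w => by simp [norm_smul, norm_toEuclideanLin_of_mem_unitaryGroup hU]⟩

theorem norm_list_prod_ofFn_apply {R W : Type*} [Semiring R] [SeminormedAddCommGroup W]
    [Module R W] {k : ℕ} (f : Fin k → Module.End R W) (c : Fin k → ℝ)
    (hf : ∀ j w, ‖f j w‖ = c j * ‖w‖) (w : W) :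
    ‖(List.ofFn f).prod w‖ = (∏ j, c j) * ‖w‖ := by
  induction k with
  | zero => simp
  | succ k ih =>
    rw [List.ofFn_succ, List.prod_cons, Module.End.mul_apply, hf,
      ih (fun j => f j.succ) (fun j => c j.succ) (fun j => hf j.succ), Fin.prod_univ_succ,
      mul_assoc]

theorem list_prod_ofFn_map_eq_sum_repr {R V A ι : Type*} [CommSemiring R] [AddCommMonoid V]
    [Module R V] [Semiring A] [Algebra R A] [Fintype ι] [DecidableEq ι] (Φ : V →ₗ[R] A)
    (b : Basis ι R V) {k : ℕ} (x : Fin k → V) :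
    (List.ofFn fun j => Φ (x j)).prod =
      ∑ i : Fin k → ι, (∏ j, b.repr (x j) (i j)) • (List.ofFn fun j => Φ (b (i j))).prod := by
  have h := ((MultilinearMap.mkPiAlgebraFin R k A).compLinearMap fun _ => Φ).map_sum
    (fun j s => b.repr (x j) s • b s)
  simpa only [b.sum_repr, MultilinearMap.map_smul_univ, MultilinearMap.compLinearMap_apply,
    MultilinearMap.mkPiAlgebraFin_apply] using h

section WordCoeffTensor

variable {W : Type*} [NormedAddCommGroup W] [InnerProductSpace ℝ W] {n k : ℕ}

def wordCoeffTensor (k : ℕ) (Φ : EuclideanSpace ℝ (Fin n) →ₗ[ℝ] Module.End ℝ W) (e u : W) :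
    EuclideanSpace ℝ (Fin k → Fin n) :=
  WithLp.toLp 2 fun i => ⟪(List.ofFn fun j => Φ (EuclideanSpace.single (i j) 1)).prod e, u⟫

theorem inner_elementaryTensor_wordCoeffTensor
    (Φ : EuclideanSpace ℝ (Fin n) →ₗ[ℝ] Module.End ℝ W) (x : Fin k → EuclideanSpace ℝ (Fin n))
    (e u : W) :
    ⟪elementaryTensor n k x, wordCoeffTensor k Φ e u⟫ =
      ⟪(List.ofFn fun j => Φ (x j)).prod e, u⟫ := by
  rw [list_prod_ofFn_map_eq_sum_repr Φ (EuclideanSpace.basisFun (Fin n) ℝ).toBasis]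
  simp [elementaryTensor, wordCoeffTensor, PiLp.inner_apply, sum_inner, real_inner_smul_left,
    mul_comm]

theorem inner_elementaryTensor_wordCoeffTensor_le
    {Φ : EuclideanSpace ℝ (Fin n) →ₗ[ℝ] Module.End ℝ W} (hΦ : ∀ v w, ‖Φ v w‖ = ‖v‖ * ‖w‖)
    (x : Fin k → EuclideanSpace ℝ (Fin n)) (e u : W) :
    ⟪elementaryTensor n k x, wordCoeffTensor k Φ e u⟫ ≤ (∏ j, ‖x j‖) * ‖e‖ * ‖u‖ := by
  rw [inner_elementaryTensor_wordCoeffTensor,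
    ← norm_list_prod_ofFn_apply _ _ (fun j => hΦ (x j)) e]
  exact real_inner_le_norm _ _

theorem sum_norm_wordCoeffTensor_sq {κ : Type*} [Fintype κ]
    {Φ : EuclideanSpace ℝ (Fin n) →ₗ[ℝ] Module.End ℝ W} (hΦ : ∀ v w, ‖Φ v w‖ = ‖v‖ * ‖w‖)
    (b : OrthonormalBasis κ ℝ W) (e : W) :
    ∑ s, ‖wordCoeffTensor k Φ e (b s)‖ ^ 2 = n ^ k * ‖e‖ ^ 2 := by
  have hword (i : Fin k → Fin n) :
      ‖(List.ofFn fun j => Φ (EuclideanSpace.single (i j) 1)).prod e‖ = ‖e‖ := by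
    simpa using norm_list_prod_ofFn_apply _ 1
      (fun j => by simpa using hΦ (EuclideanSpace.single (i j) 1)) e
  simp only [EuclideanSpace.norm_sq_eq, wordCoeffTensor, Real.norm_eq_abs, sq_abs]
  rw [Finset.sum_comm]
  simp [b.sum_sq_inner_left, hword]

end WordCoeffTensor

theorem exists_magical_tensor_general (n k : ℕ) (N : ℕ) (hN₁ : 1 ≤ N) (hN : HasOrthSubspace n N) :
    ∃ z : EuclideanSpace ℝ (Fin k → Fin n),
      (∀ x : Fin k → EuclideanSpace ℝ (Fin n),
        ⟪elementaryTensor n k x, z⟫ ≤ ∏ j, ‖x j‖) ∧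
      (n : ℝ) ^ k / N ≤ ‖z‖ ^ 2 := by
  obtain ⟨Φ, hΦ⟩ := hN.exists_linearMap_norm_apply_eq_mul hN₁
  set e : EuclideanSpace ℝ (Fin N) := EuclideanSpace.single ⟨0, hN₁⟩ 1
  have he : ‖e‖ = 1 := by simp [e]
  let b := EuclideanSpace.basisFun (Fin N) ℝ
  obtain ⟨s, -, hs⟩ := Finset.exists_le_of_sum_le (Finset.univ_nonempty_iff.2 ⟨⟨0, hN₁⟩⟩)
    (f := fun _ => (n : ℝ) ^ k / N) (g := fun s => ‖wordCoeffTensor k Φ e (b s)‖ ^ 2)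
    (le_of_eq <| by
      rw [Finset.sum_const, Finset.card_univ, Fintype.card_fin, nsmul_eq_mul,
        sum_norm_wordCoeffTensor_sq hΦ b e, he, one_pow, mul_one]
      field_simp)
  refine ⟨wordCoeffTensor k Φ e (b s), fun x => ?_, hs⟩
  simpa [he, b] using inner_elementaryTensor_wordCoeffTensor_le hΦ x e (b s)

/-- **Lemma.** If `N = N(n)` is the minimal size of a matrix algebra containing an
`n`-dimensional subspace of multiples of orthogonal matrices, then there is a tensor
`z ∈ (ℝⁿ)^{⊗k}` with `⟨x₁ ⊗ ⋯ ⊗ x_k, z⟩ ≤ ‖x₁‖⋯‖x_k‖` for all `xᵢ`, and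
`‖z‖² ≥ nᵏ / N(n)`. -/
theorem exists_magical_tensor (n k : ℕ) (hn : 1 ≤ n) (hk : 1 ≤ k)
    (N : ℕ) (hN₁ : 1 ≤ N) (hN : HasOrthSubspace n N)
    (hNmin : ∀ N' : ℕ, 1 ≤ N' → HasOrthSubspace n N' → N ≤ N') :
    ∃ z : EuclideanSpace ℝ (Fin k → Fin n),
      (∀ x : Fin k → EuclideanSpace ℝ (Fin n),
        ⟪elementaryTensor n k x, z⟫ ≤ ∏ j, ‖x j‖) ∧
      (n : ℝ) ^ k / N ≤ ‖z‖ ^ 2 :=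
  exists_magical_tensor_general n k N hN₁ hN

end
end

section
/- Let n, d ≥ 1 and let X_0, X_1, …, X_n ∈ Herm_d. Identify X = (X_0, X_1, …, X_n) with the tensor Σ_{s=0}^n e_s ⊗ X_s ∈ R^{n+1} ⊗ Herm_d, where (e_0, …, e_n) is the standard basis of R^{n+1}. Then the following are equivalent: (1) X ∈ L_n ⊗max PSD(C^d); (2) X_0 is positive semidefinite and X_0 ⊗ X_0 − Σ_{s=1}^n X_s ⊗ X_s ∈ PSD(C^d) ⊗max PSD(C^d). -/
open scoped TensorProduct ComplexOrder
open Set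

noncomputable section

abbrev HermMat (d : ℕ) := ↥(selfAdjoint (Matrix (Fin d) (Fin d) ℂ))

/-- The cone of positive semidefinite matrices inside the Hermitian matrices. -/
def psdCone (d : ℕ) : Set (HermMat d) :=
  {X | Matrix.PosSemidef (X : Matrix (Fin d) (Fin d) ℂ)}

/-!
Pairing `e₀ ⊗ X₀ + Σ eₛ ⊗ Xₛ` with `φ ⊗ ψ` gives `φ (ψ X₀, (ψ Xₛ)ₛ)`, so by self-duality of the
Lorentz cone this tensor lies in `L_n ⊗max K` iff `(ψ X₀, (ψ Xₛ)ₛ) ∈ L_n` for every `ψ ∈ K*`.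
Pairing `X₀ ⊗ X₀ - Σ Xₛ ⊗ Xₛ` with `ψ₁ ⊗ ψ₂` gives the Minkowski form of the two such vectors.
By Cauchy–Schwarz this form is nonnegative on `L_n × L_n`, and a vector `(t, x)` with `t ≥ 0`
lies in `L_n` as soon as its Minkowski square `t² - ‖x‖²` is nonnegative; `ψ X₀ ≥ 0` for all
`ψ ∈ K*` is `X₀ ∈ K` because `K** = K` for the PSD cone.
-/

open scoped InnerProductSpace

section Minkowski

variable {E : Type*} [NormedAddCommGroup E] [InnerProductSpace ℝ E]

def minkowskiForm (p q : ℝ × E) : ℝ := p.1 * q.1 - ⟪p.2, q.2⟫_ℝ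

lemma minkowskiForm_self (p : ℝ × E) : minkowskiForm p p = p.1 ^ 2 - ‖p.2‖ ^ 2 := by
  rw [minkowskiForm, real_inner_self_eq_norm_sq]
  ring

def minkowskiDual (q : ℝ × E) : Module.Dual ℝ (ℝ × E) :=
  q.1 • LinearMap.fst ℝ ℝ E - (innerₛₗ ℝ q.2).comp (LinearMap.snd ℝ ℝ E)

@[simp] lemma minkowskiDual_apply (q p : ℝ × E) : minkowskiDual q p = minkowskiForm q p := by
  simp [minkowskiDual, minkowskiForm]

end Minkowski

section LorentzCone

variable {n : ℕ}

lemma mem_lorentzCone_iff {p : ℝ × EuclideanSpace ℝ (Fin n)} :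
    p ∈ lorentzCone n ↔ 0 ≤ p.1 ∧ 0 ≤ minkowskiForm p p := by
  rw [minkowskiForm_self, sub_nonneg]
  constructor
  · intro h
    exact ⟨(norm_nonneg _).trans h, pow_le_pow_left₀ (norm_nonneg _) h 2⟩
  · rintro ⟨h0, h⟩
    exact (pow_le_pow_iff_left₀ (norm_nonneg _) h0 two_ne_zero).1 h

lemma minkowskiForm_nonneg {p q : ℝ × EuclideanSpace ℝ (Fin n)}
    (hp : p ∈ lorentzCone n) (hq : q ∈ lorentzCone n) : 0 ≤ minkowskiForm p q :=
  sub_nonneg.2 <| (real_inner_le_norm _ _).trans <|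
    mul_le_mul hp hq (norm_nonneg _) ((norm_nonneg _).trans hp)

lemma minkowskiDual_mem_dualConeSet {q : ℝ × EuclideanSpace ℝ (Fin n)}
    (hq : q ∈ lorentzCone n) : minkowskiDual q ∈ dualConeSet (lorentzCone n) :=
  fun p hp => (minkowskiDual_apply q p).symm ▸ minkowskiForm_nonneg hq hp

lemma mem_lorentzCone_of_forall_dualConeSet {p : ℝ × EuclideanSpace ℝ (Fin n)}
    (h : ∀ φ ∈ dualConeSet (lorentzCone n), 0 ≤ φ p) : p ∈ lorentzCone n := by
  have hfst : 0 ≤ p.1 := by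
    simpa [minkowskiForm] using
      h _ (minkowskiDual_mem_dualConeSet (q := (1, 0)) (by simp [lorentzCone]))
  have hnorm : 0 ≤ ‖p.2‖ * p.1 - ‖p.2‖ ^ 2 := by
    simpa [minkowskiForm, real_inner_self_eq_norm_sq] using
      h _ (minkowskiDual_mem_dualConeSet (q := (‖p.2‖, p.2)) (by simp [lorentzCone]))
  show ‖p.2‖ ≤ p.1
  nlinarith [norm_nonneg p.2]

end LorentzCone

section LorentzTensor

variable {n : ℕ} {W : Type*} [AddCommGroup W] [Module ℝ W]

def lorentzTensor (X₀ : W) (X : Fin n → W) : (ℝ × EuclideanSpace ℝ (Fin n)) ⊗[ℝ] W :=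
  ((1 : ℝ), (0 : EuclideanSpace ℝ (Fin n))) ⊗ₜ[ℝ] X₀ +
    ∑ s, ((0 : ℝ), EuclideanSpace.single s (1 : ℝ)) ⊗ₜ[ℝ] X s

def lorentzCoords (X₀ : W) (X : Fin n → W) (ψ : Module.Dual ℝ W) :
    ℝ × EuclideanSpace ℝ (Fin n) :=
  (ψ X₀, WithLp.toLp 2 fun s => ψ (X s))

lemma prod_eq_smul_add_sum_single (p : ℝ × EuclideanSpace ℝ (Fin n)) :
    p = p.1 • ((1 : ℝ), (0 : EuclideanSpace ℝ (Fin n))) +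
      ∑ s, p.2 s • ((0 : ℝ), EuclideanSpace.single s (1 : ℝ)) := by
  have h : ∑ s, p.2 s • EuclideanSpace.single s (1 : ℝ) = p.2 := by
    simpa using (EuclideanSpace.basisFun (Fin n) ℝ).sum_repr p.2
  refine Prod.ext ?_ ?_ <;> simp [Prod.fst_sum, Prod.snd_sum, h]

lemma dualDistrib_lorentzTensor (φ : Module.Dual ℝ (ℝ × EuclideanSpace ℝ (Fin n)))
    (ψ : Module.Dual ℝ W) (X₀ : W) (X : Fin n → W) :
    TensorProduct.dualDistrib ℝ (ℝ × EuclideanSpace ℝ (Fin n)) W (φ ⊗ₜ[ℝ] ψ)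
        (lorentzTensor X₀ X) = φ (lorentzCoords X₀ X ψ) := by
  conv_rhs => rw [prod_eq_smul_add_sum_single (lorentzCoords X₀ X ψ), map_add, map_smul, map_sum]
  simp only [map_smul, smul_eq_mul]
  simp [lorentzTensor, TensorProduct.dualDistrib_apply, lorentzCoords, mul_comm]

lemma dualDistrib_sub_sum_tmul (ψ₁ ψ₂ : Module.Dual ℝ W) (X₀ : W) (X : Fin n → W) :
    TensorProduct.dualDistrib ℝ W W (ψ₁ ⊗ₜ[ℝ] ψ₂) (X₀ ⊗ₜ[ℝ] X₀ - ∑ s, X s ⊗ₜ[ℝ] X s) =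
      minkowskiForm (lorentzCoords X₀ X ψ₁) (lorentzCoords X₀ X ψ₂) := by
  simp [TensorProduct.dualDistrib_apply, minkowskiForm, lorentzCoords, PiLp.inner_apply, mul_comm]

lemma mem_maxTensor_lorentzCone_iff {K : Set W} {X₀ : W} {X : Fin n → W} :
    lorentzTensor X₀ X ∈ maxTensor (lorentzCone n) K ↔
      ∀ ψ ∈ dualConeSet K, lorentzCoords X₀ X ψ ∈ lorentzCone n := by
  simp only [maxTensor, mem_ofPred_eq, dualDistrib_lorentzTensor]
  exact ⟨fun h ψ hψ => mem_lorentzCone_of_forall_dualConeSet fun φ hφ => h φ hφ ψ hψ,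
    fun h φ hφ ψ hψ => hφ _ (h ψ hψ)⟩

theorem maxTensor_lorentzCone_iff {K : Set W}
    (hK : ∀ x, (∀ ψ ∈ dualConeSet K, 0 ≤ ψ x) → x ∈ K) (X₀ : W) (X : Fin n → W) :
    lorentzTensor X₀ X ∈ maxTensor (lorentzCone n) K ↔
      X₀ ∈ K ∧ (X₀ ⊗ₜ[ℝ] X₀ - ∑ s, X s ⊗ₜ[ℝ] X s) ∈ maxTensor K K := by
  rw [mem_maxTensor_lorentzCone_iff]
  simp only [maxTensor, mem_ofPred_eq, dualDistrib_sub_sum_tmul]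
  constructor
  · intro h
    exact ⟨hK X₀ fun ψ hψ => (mem_lorentzCone_iff.1 (h ψ hψ)).1,
      fun ψ₁ hψ₁ ψ₂ hψ₂ => minkowskiForm_nonneg (h ψ₁ hψ₁) (h ψ₂ hψ₂)⟩
  · rintro ⟨hX₀, hW⟩ ψ hψ
    exact mem_lorentzCone_iff.2 ⟨hψ X₀ hX₀, hW ψ hψ ψ hψ⟩

end LorentzTensor

section PSD

variable {d : ℕ}

def quadFormDual (v : Fin d → ℂ) : Module.Dual ℝ (HermMat d) where
  toFun A := (star v ⬝ᵥ (A : Matrix (Fin d) (Fin d) ℂ).mulVec v).re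
  map_add' A B := by simp [Matrix.add_mulVec, dotProduct_add]
  map_smul' r A := by simp [Matrix.smul_mulVec, dotProduct_smul]

lemma quadFormDual_mem_dualConeSet (v : Fin d → ℂ) :
    quadFormDual v ∈ dualConeSet (psdCone d) :=
  fun _ hA => (Complex.nonneg_iff.1 (hA.dotProduct_mulVec_nonneg v)).1

lemma mem_psdCone_of_forall_dualConeSet {A : HermMat d}
    (h : ∀ ψ ∈ dualConeSet (psdCone d), 0 ≤ ψ A) : A ∈ psdCone d := by
  have hA : (A : Matrix (Fin d) (Fin d) ℂ).IsHermitian := A.prop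
  refine Matrix.PosSemidef.of_dotProduct_mulVec_nonneg hA fun v => Complex.nonneg_iff.2
    ⟨h _ (quadFormDual_mem_dualConeSet v), (hA.im_star_dotProduct_mulVec_self v).symm⟩

end PSD

theorem maxTensor_lorentz_psd_iff_general (n d : ℕ)
    (X₀ : HermMat d) (X : Fin n → HermMat d) :
    ((((1 : ℝ), (0 : EuclideanSpace ℝ (Fin n))) ⊗ₜ[ℝ] X₀ +
        ∑ s, ((0 : ℝ), (EuclideanSpace.single s (1 : ℝ))) ⊗ₜ[ℝ] X s) ∈
          maxTensor (lorentzCone n) (psdCone d)) ↔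
      (X₀ ∈ psdCone d ∧
        (X₀ ⊗ₜ[ℝ] X₀ - ∑ s, X s ⊗ₜ[ℝ] X s) ∈ maxTensor (psdCone d) (psdCone d)) :=
  maxTensor_lorentzCone_iff (fun _ => mem_psdCone_of_forall_dualConeSet) X₀ X

/-- **Proposition (maximal tensor product with a Lorentz cone).** For Hermitian matrices
`X₀, X₁, …, X_n`, the tensor `Σ_s e_s ⊗ X_s` lies in `L_n ⊗max PSD(ℂ^d)` iff `X₀ ⪰ 0` and
`X₀ ⊗ X₀ − Σ_{s≥1} X_s ⊗ X_s ∈ PSD(ℂ^d) ⊗max PSD(ℂ^d)`. -/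
theorem maxTensor_lorentz_psd_iff (n d : ℕ) (hn : 1 ≤ n) (hd : 1 ≤ d)
    (X₀ : HermMat d) (X : Fin n → HermMat d) :
    ((((1 : ℝ), (0 : EuclideanSpace ℝ (Fin n))) ⊗ₜ[ℝ] X₀ +
        ∑ s, ((0 : ℝ), (EuclideanSpace.single s (1 : ℝ))) ⊗ₜ[ℝ] X s) ∈
          maxTensor (lorentzCone n) (psdCone d)) ↔
      (X₀ ∈ psdCone d ∧
        (X₀ ⊗ₜ[ℝ] X₀ - ∑ s, X s ⊗ₜ[ℝ] X s) ∈ maxTensor (psdCone d) (psdCone d)) :=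
  maxTensor_lorentz_psd_iff_general n d X₀ X

end
end
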